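/- arXiv:1901.09866 — 2 statements merged into one kernel-verified Lean document; each statement's English description precedes it below -/
import Mathlib

section
/- Let n ≥ 3 and let r_1, …, r_n > 0. For a connecting cycle with angles α_1, …, α_n such that all side lengths l_j are nonzero, the partial derivative of the perimeter L with respect to α_j equals r_{j−1} r_j sin(α_j − α_{j−1}) / l_{j−1} + r_{j+1} r_j sin(α_j − α_{j+1}) / l_j, for each j (indices mod n). -/
open Real

/-- The length of the `j`-th side of the connecting cycle for `n` concentric circles with
radii `r` and polar angles `α`:
`l_j = √(r_j² + r_{j+1}² − 2 r_j r_{j+1} cos(α_{j+1} − α_j))`, indices mod `n`. -/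
noncomputable def sideLen {n : ℕ} [NeZero n] (r α : Fin n → ℝ) (j : Fin n) : ℝ :=
  Real.sqrt (r j ^ 2 + r (j + 1) ^ 2 - 2 * r j * r (j + 1) * Real.cos (α (j + 1) - α j))

/-- The perimeter `L = Σ_j l_j` of the connecting cycle. -/
noncomputable def perim {n : ℕ} [NeZero n] (r α : Fin n → ℝ) : ℝ :=
  ∑ j, sideLen r α j

open Function

/-! Only the two sides `l_{j-1}` and `l_j` meeting at `p_j` depend on `α_j`. Each is a law-of-cosines
chord `√(a² + b² − 2ab cos θ)`, whose derivative in `θ` is `ab sin θ / √(…)`; the angle is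
`α_j − α_{j-1}` for the first side and `α_{j+1} − α_j` for the second, which contributes the sign
flip. -/

theorem HasDerivAt.sqrt_sq_add_sq_sub_mul_cos {φ : ℝ → ℝ} {φ' t : ℝ} (a b : ℝ)
    (hφ : HasDerivAt φ φ' t) (h : √(a ^ 2 + b ^ 2 - 2 * a * b * Real.cos (φ t)) ≠ 0) :
    HasDerivAt (fun s => √(a ^ 2 + b ^ 2 - 2 * a * b * Real.cos (φ s)))
      (a * b * Real.sin (φ t) * φ' / √(a ^ 2 + b ^ 2 - 2 * a * b * Real.cos (φ t))) t := by
  convert ((hφ.cos.const_mul (2 * a * b)).const_sub (a ^ 2 + b ^ 2)).sqrt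
    fun h0 => h (by rw [h0, sqrt_zero]) using 1
  field_simp

section ConnectingCycle

variable {n : ℕ} [NeZero n] (r α : Fin n → ℝ) (j : Fin n)

theorem one_ne_zero_of_sideLen_ne_zero (hl : sideLen r α j ≠ 0) : (1 : Fin n) ≠ 0 := by
  -- for `n = 1` the only side joins a vertex to itself
  intro h
  apply hl
  simp only [sideLen, h, add_zero, sub_self, cos_zero]
  ring_nf
  exact sqrt_zero

variable {r α j}

theorem sideLen_update_of_ne {i : Fin n} (hi : i ≠ j) (hi' : i + 1 ≠ j) (t : ℝ) :
    sideLen r (update α j t) i = sideLen r α i := by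
  simp only [sideLen, update_of_ne hi, update_of_ne hi']

theorem sideLen_update_sub_one (h : (1 : Fin n) ≠ 0) (t : ℝ) :
    sideLen r (update α j t) (j - 1) =
      √(r (j - 1) ^ 2 + r j ^ 2 - 2 * r (j - 1) * r j * cos (t - α (j - 1))) := by
  have hj : j - 1 ≠ j := sub_eq_self.not.mpr h
  simp only [sideLen, sub_add_cancel, update_self, update_of_ne hj]

theorem sideLen_update_self (h : (1 : Fin n) ≠ 0) (t : ℝ) :
    sideLen r (update α j t) j =
      √(r j ^ 2 + r (j + 1) ^ 2 - 2 * r j * r (j + 1) * cos (α (j + 1) - t)) := by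
  have hj : j + 1 ≠ j := add_eq_left.not.mpr h
  simp only [sideLen, update_self, update_of_ne hj]

theorem hasDerivAt_sideLen_update_sub_one (h : (1 : Fin n) ≠ 0) (hl : sideLen r α (j - 1) ≠ 0) :
    HasDerivAt (fun t => sideLen r (update α j t) (j - 1))
      (r (j - 1) * r j * sin (α j - α (j - 1)) / sideLen r α (j - 1)) (α j) := by
  have hα : sideLen r α (j - 1) = sideLen r (update α j (α j)) (j - 1) := by rw [update_eq_self]
  simp only [hα, sideLen_update_sub_one h] at hl ⊢
  simpa using ((hasDerivAt_id' (α j)).sub_const (α (j - 1))).sqrt_sq_add_sq_sub_mul_cos _ _ hl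

theorem hasDerivAt_sideLen_update_self (h : (1 : Fin n) ≠ 0) (hl : sideLen r α j ≠ 0) :
    HasDerivAt (fun t => sideLen r (update α j t) j)
      (r (j + 1) * r j * sin (α j - α (j + 1)) / sideLen r α j) (α j) := by
  have hα : sideLen r α j = sideLen r (update α j (α j)) j := by rw [update_eq_self]
  simp only [hα, sideLen_update_self h] at hl ⊢
  convert ((hasDerivAt_id' (α j)).const_sub (α (j + 1))).sqrt_sq_add_sq_sub_mul_cos _ _ hl using 1
  rw [← neg_sub, sin_neg]
  ring

theorem perim_eq_sideLen_sub_one_add_sideLen_add (h : (1 : Fin n) ≠ 0) (β : Fin n → ℝ) :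
    perim r β = sideLen r β (j - 1) + sideLen r β j +
      ∑ i ∈ ({j - 1, j} : Finset (Fin n))ᶜ, sideLen r β i := by
  rw [perim, ← Finset.sum_add_sum_compl {j - 1, j}, Finset.sum_pair (sub_eq_self.not.mpr h)]

end ConnectingCycle

theorem stmt_0_general {n : ℕ} [NeZero n] (r : Fin n → ℝ)
    (α : Fin n → ℝ) (hl : ∀ j, sideLen r α j ≠ 0) (j : Fin n) :
    HasDerivAt (fun t => perim r (Function.update α j t))
      (r (j - 1) * r j * Real.sin (α j - α (j - 1)) / sideLen r α (j - 1) +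
        r (j + 1) * r j * Real.sin (α j - α (j + 1)) / sideLen r α j) (α j) := by
  have h1 := one_ne_zero_of_sideLen_ne_zero r α j (hl j)
  have hrest : ∀ t, ∑ i ∈ ({j - 1, j} : Finset (Fin n))ᶜ, sideLen r (update α j t) i =
      ∑ i ∈ ({j - 1, j} : Finset (Fin n))ᶜ, sideLen r α i := fun t =>
    Finset.sum_congr rfl fun i hi => by
      simp only [Finset.mem_compl, Finset.mem_insert, Finset.mem_singleton, not_or] at hi
      exact sideLen_update_of_ne hi.2 (fun h => hi.1 (eq_sub_of_add_eq h)) t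
  simp only [perim_eq_sideLen_sub_one_add_sideLen_add (j := j) h1, hrest]
  exact ((hasDerivAt_sideLen_update_sub_one h1 (hl _)).add
    (hasDerivAt_sideLen_update_self h1 (hl j))).add_const _

/-- for `n ≥ 3` concentric circles with positive radii and a connecting cycle
whose side lengths are all nonzero, the partial derivative of the perimeter with respect to
`α_j` equals `r_{j−1} r_j sin(α_j − α_{j−1}) / l_{j−1} + r_{j+1} r_j sin(α_j − α_{j+1}) / l_j`. -/
theorem stmt_0 {n : ℕ} [NeZero n] (hn : 3 ≤ n) (r : Fin n → ℝ) (hr : ∀ i, 0 < r i)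
    (α : Fin n → ℝ) (hl : ∀ j, sideLen r α j ≠ 0) (j : Fin n) :
    HasDerivAt (fun t => perim r (Function.update α j t))
      (r (j - 1) * r j * Real.sin (α j - α (j - 1)) / sideLen r α (j - 1) +
        r (j + 1) * r j * Real.sin (α j - α (j + 1)) / sideLen r α j) (α j) :=
  stmt_0_general r α hl j
end

section
/- Let n ≥ 3 and let r_1, …, r_n > 0. If α_1, …, α_n is a parade (every α_i ∈ {0, π}) whose consecutive vertices are distinct (x_i ≠ x_{i+1} for all i, where x_i = ±r_i is the signed coordinate of p_i), then all n partial derivatives ∂L/∂α_j vanish at this configuration; that is, every parade is a stationary connecting cycle. -/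
open Real

/-!
Moving a single vertex `p_j` along its circle changes only the two sides `l_{j-1}` and `l_j`,
and each of them depends on `α_j` only through the angle between its endpoints. By the law of
cosines a side is `√(a² + b² - 2ab cos θ)`, whose derivative `ab sin θ / √(…)` vanishes when
`θ ∈ πℤ`, as long as the side is not degenerate. For a parade every such angle is a multiple
of `π`, and the square of a side is `(x_k - x_{k+1})²`, nonzero by assumption.
-/

noncomputable def chordLen (a b θ : ℝ) : ℝ :=
  √(a ^ 2 + b ^ 2 - 2 * a * b * cos θ)

theorem sideLen_eq_chordLen {n : ℕ} [NeZero n] (r α : Fin n → ℝ) (k : Fin n) :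
    sideLen r α k = chordLen (r k) (r (k + 1)) (α (k + 1) - α k) :=
  rfl

theorem hasDerivAt_chordLen_of_sin_eq_zero {a b θ : ℝ} (hsin : sin θ = 0)
    (hne : a ^ 2 + b ^ 2 - 2 * a * b * cos θ ≠ 0) : HasDerivAt (chordLen a b) 0 θ := by
  have h := (((hasDerivAt_cos θ).const_mul (2 * a * b)).const_sub (a ^ 2 + b ^ 2)).sqrt hne
  rw [hsin] at h
  unfold chordLen
  simpa using h

theorem sq_add_sq_sub_mul_cos_sub {a b x y : ℝ} (hx : sin x = 0) (hy : sin y = 0) :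
    a ^ 2 + b ^ 2 - 2 * a * b * cos (y - x) = (a * cos x - b * cos y) ^ 2 := by
  have hx2 := sin_sq_add_cos_sq x
  have hy2 := sin_sq_add_cos_sq y
  rw [cos_sub, hx, hy] at *
  linear_combination (-a ^ 2) * hx2 - b ^ 2 * hy2

theorem hasDerivAt_sideLen_update {n : ℕ} [NeZero n] {r α : Fin n → ℝ} {k : Fin n}
    (hk : k + 1 ≠ k) (hsin : sin (α (k + 1) - α k) = 0)
    (hne : r k ^ 2 + r (k + 1) ^ 2 - 2 * r k * r (k + 1) * cos (α (k + 1) - α k) ≠ 0)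
    (j : Fin n) : HasDerivAt (fun t => sideLen r (Function.update α j t) k) 0 (α j) := by
  have hchord := hasDerivAt_chordLen_of_sin_eq_zero hsin hne
  simp only [sideLen_eq_chordLen]
  by_cases hkj : k = j
  · subst hkj
    simp only [Function.update_self, Function.update_of_ne hk]
    simpa [Function.comp_def] using
      hchord.comp (α k) ((hasDerivAt_id (α k)).const_sub (α (k + 1)))
  by_cases hk1j : k + 1 = j
  · subst hk1j
    simp only [Function.update_self, Function.update_of_ne (Ne.symm hk)]
    simpa [Function.comp_def] using
      hchord.comp (α (k + 1)) ((hasDerivAt_id (α (k + 1))).sub_const (α k))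
  · simp only [Function.update_of_ne hkj, Function.update_of_ne hk1j]
    exact hasDerivAt_const _ _

theorem stmt_1_general {n : ℕ} [NeZero n] (r : Fin n → ℝ)
    (α : Fin n → ℝ) (hparade : ∀ i, α i = 0 ∨ α i = π)
    (hx : ∀ i, r i * Real.cos (α i) ≠ r (i + 1) * Real.cos (α (i + 1))) :
    ∀ j, HasDerivAt (fun t => perim r (Function.update α j t)) 0 (α j) := by
  intro j
  have hsin : ∀ i, sin (α i) = 0 := fun i => by rcases hparade i with h | h <;> simp [h]
  have hside : ∀ k, HasDerivAt (fun t => sideLen r (Function.update α j t) k) 0 (α j) := by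
    intro k
    refine hasDerivAt_sideLen_update (fun h => hx k (by rw [h])) ?_ ?_ j
    · rw [sin_sub, hsin, hsin]; ring
    · rw [sq_add_sq_sub_mul_cos_sub (hsin k) (hsin (k + 1))]
      exact pow_ne_zero 2 (sub_ne_zero.mpr (hx k))
  simpa [perim] using HasDerivAt.fun_sum (u := Finset.univ) fun k _ => hside k

/-- every parade (all angles `0` or `π`) with distinct consecutive signed
coordinates `x_i = r_i cos α_i` is a stationary connecting cycle: all partial derivatives
of the perimeter vanish there. -/
theorem stmt_1 {n : ℕ} [NeZero n] (hn : 3 ≤ n) (r : Fin n → ℝ) (hr : ∀ i, 0 < r i)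
    (α : Fin n → ℝ) (hparade : ∀ i, α i = 0 ∨ α i = π)
    (hx : ∀ i, r i * Real.cos (α i) ≠ r (i + 1) * Real.cos (α (i + 1))) :
    ∀ j, HasDerivAt (fun t => perim r (Function.update α j t)) 0 (α j) :=
  stmt_1_general r α hparade hx
end
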